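/- Let f be convex with L_f-Lipschitz gradient, g proper lsc convex, and 0 < γ < 1/L_f. Then φ = f + g has bounded sublevel sets if and only if the forward-backward envelope φ_γ has bounded sublevel sets. -/

import Mathlib

set_option linter.unusedVariables false
noncomputable section

/-- Euclidean space ℝⁿ. -/
abbrev Eucl (n : ℕ) := EuclideanSpace ℝ (Fin n)

/-- A proper extended-real-valued function: not identically +∞ and nowhere -∞. -/
def ProperFun {n : ℕ} (g : Eucl n → EReal) : Prop := (∃ x, g x ≠ ⊤) ∧ ∀ x, g x ≠ ⊥

/-- Convexity for extended-real-valued functions. -/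
def ConvexFun {n : ℕ} (g : Eucl n → EReal) : Prop :=
  ∀ x y : Eucl n, ∀ a b : ℝ, 0 ≤ a → 0 ≤ b → a + b = 1 →
    g (a • x + b • y) ≤ (a : EReal) * g x + (b : EReal) * g y

/-- `p` is the proximal point `prox_{γ g}(y)`, i.e. it minimizes
`w ↦ g w + (1/(2γ))‖w - y‖²`. -/
def IsProx {n : ℕ} (g : Eucl n → EReal) (γ : ℝ) (y p : Eucl n) : Prop :=
  ∀ w, g p + ((1/(2*γ) * ‖p - y‖^2 : ℝ) : EReal) ≤ g w + ((1/(2*γ) * ‖w - y‖^2 : ℝ) : EReal)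

/-- The Moreau envelope `g^γ(x) = inf_w { g w + (1/(2γ))‖w - x‖² }`. -/
def moreauEnv {n : ℕ} (g : Eucl n → EReal) (γ : ℝ) (x : Eucl n) : EReal :=
  ⨅ w, g w + ((1/(2*γ) * ‖w - x‖^2 : ℝ) : EReal)

/-- The convex subdifferential of an extended-real-valued function. -/
def subdiff {n : ℕ} (φ : Eucl n → EReal) (x : Eucl n) : Set (Eucl n) :=
  {v | ∀ z, φ x + ((inner ℝ v (z - x) : ℝ) : EReal) ≤ φ z}

/-- The forward-backward envelope
`φ_γ(x) = inf_w { f x + ⟨∇f x, w - x⟩ + (1/(2γ))‖w - x‖² + g w }`. -/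
def fbe {n : ℕ} (f : Eucl n → ℝ) (f' : Eucl n → Eucl n) (g : Eucl n → EReal) (γ : ℝ)
    (x : Eucl n) : EReal :=
  ⨅ w, ((f x + (inner ℝ (f' x) (w - x) : ℝ) + 1/(2*γ) * ‖w - x‖^2 : ℝ) : EReal) + g w

/-- The distance (in `EReal`, so `⊤` if the set is empty) from `0` to a set of vectors. -/
def distZero {n : ℕ} (S : Set (Eucl n)) : EReal := ⨅ v ∈ S, ((‖v‖ : ℝ) : EReal)

theorem descent_lemma' {n : ℕ} (f : Eucl n → ℝ) (f' : Eucl n → Eucl n)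
    (hgrad : ∀ x, HasGradientAt f (f' x) x)
    (Lf : ℝ) (hLf : 0 < Lf) (hlip : LipschitzWith (Real.toNNReal Lf) f')
    (x w : Eucl n) :
    f w ≤ f x + (inner ℝ (f' x) (w - x) : ℝ) + Lf/2 * ‖w - x‖^2 := by
  set v := w - x with hv
  have hline : ∀ t : ℝ, HasDerivAt (fun t : ℝ => f (x + t • v)) ((inner ℝ (f' (x + t • v)) v : ℝ)) t := by
    intro t
    have h1 : HasDerivAt (fun t : ℝ => x + t • v) v t := by
      simpa using ((hasDerivAt_id t).smul_const v).const_add x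
    have h2 := (hgrad (x + t • v)).hasFDerivAt
    have := h2.comp_hasDerivAt t h1
    exact this
  set B : ℝ := (inner ℝ (f' x) v : ℝ) with hB
  set h : ℝ → ℝ := fun t => f (x + t • v) - t * B - (Lf/2 * ‖v‖^2) * t^2 with hh
  have hderiv : ∀ t : ℝ, HasDerivAt h ((inner ℝ (f' (x + t • v)) v : ℝ) - B - (Lf/2 * ‖v‖^2) * (2*t)) t := by
    intro t
    have d1 := hline t
    have d2 : HasDerivAt (fun t : ℝ => t * B) B t := by
      simpa using (hasDerivAt_id t).mul_const B
    have d3 : HasDerivAt (fun t : ℝ => (Lf/2 * ‖v‖^2) * t^2) ((Lf/2 * ‖v‖^2) * (2*t)) t := by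
      have := (hasDerivAt_pow 2 t).const_mul (Lf/2 * ‖v‖^2)
      simpa [mul_comm] using this
    exact (d1.sub d2).sub d3
  have hanti : AntitoneOn h (Set.Icc 0 1) := by
    apply antitoneOn_of_deriv_nonpos (convex_Icc 0 1)
    · exact fun t _ => (hderiv t).continuousAt.continuousWithinAt
    · exact fun t _ => (hderiv t).differentiableAt.differentiableWithinAt
    · intro t ht
      rw [interior_Icc] at ht
      rw [(hderiv t).deriv]
      have hineq : (inner ℝ (f' (x + t • v)) v : ℝ) - B ≤ Lf * t * ‖v‖^2 := by
        have heq : (inner ℝ (f' (x + t • v)) v : ℝ) - B = (inner ℝ (f' (x + t • v) - f' x) v : ℝ) := by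
          rw [inner_sub_left]
        rw [heq]
        calc (inner ℝ (f' (x + t • v) - f' x) v : ℝ) ≤ ‖f' (x + t • v) - f' x‖ * ‖v‖ :=
              real_inner_le_norm _ _
          _ ≤ (Lf * ‖t • v‖) * ‖v‖ := by
              apply mul_le_mul_of_nonneg_right _ (norm_nonneg v)
              have := hlip.dist_le_mul (x + t • v) x
              rw [dist_eq_norm] at this
              simpa [Real.coe_toNNReal _ hLf.le, dist_eq_norm] using this
          _ = Lf * (|t| * ‖v‖) * ‖v‖ := by rw [norm_smul, Real.norm_eq_abs]
          _ = Lf * t * ‖v‖^2 := by rw [abs_of_pos ht.1]; ring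
      nlinarith [sq_nonneg ‖v‖]
  have h10 := hanti (Set.mem_Icc.2 ⟨le_refl 0, zero_le_one⟩) (Set.mem_Icc.2 ⟨zero_le_one, le_refl 1⟩) zero_le_one
  simp only [hh, one_smul, zero_smul, add_zero, one_pow, mul_one, zero_pow, mul_zero, sub_zero, zero_mul] at h10
  have hxv : x + v = w := by rw [hv]; abel
  rw [hxv] at h10
  linarith

theorem lsc_bddBelow' {n : ℕ} {g : Eucl n → EReal} {K : Set (Eucl n)} (hK : IsCompact K)
    (hglsc : LowerSemicontinuous g) (hb : ∀ x, g x ≠ ⊥) :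
    ∃ m : ℝ, ∀ x ∈ K, (m : EReal) ≤ g x := by
  have hopen : ∀ r : ℝ, IsOpen {x : Eucl n | (r : EReal) < g x} := by
    intro r
    exact hglsc.isOpen_preimage (r : EReal)
  have hcov : K ⊆ ⋃ r : ℝ, {x : Eucl n | (r : EReal) < g x} := by
    intro x _
    have hbot : (⊥ : EReal) < g x := Ne.bot_lt (hb x)
    obtain ⟨r, _, hr2⟩ := EReal.exists_between_coe_real hbot
    exact Set.mem_iUnion.2 ⟨r, hr2⟩
  obtain ⟨t, ht⟩ := hK.elim_finite_subcover _ hopen hcov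
  by_cases hne : t.Nonempty
  · refine ⟨t.min' hne, fun x hx => ?_⟩
    obtain ⟨r, hr, hxr⟩ := Set.mem_iUnion₂.1 (ht hx)
    calc ((t.min' hne : ℝ) : EReal) ≤ (r : EReal) := by
          exact_mod_cast t.min'_le r hr
      _ ≤ g x := le_of_lt hxr
  · refine ⟨0, fun x hx => ?_⟩
    obtain ⟨r, hr, _⟩ := Set.mem_iUnion₂.1 (ht hx)
    exact absurd ⟨r, hr⟩ hne


/-- `φ` has bounded sublevel sets iff the FBE `φ_γ` does. -/
theorem level_bounded_iff {n : ℕ} (f : Eucl n → ℝ) (f' : Eucl n → Eucl n)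
    (hconvf : ConvexOn ℝ Set.univ f) (hgrad : ∀ x, HasGradientAt f (f' x) x)
    (Lf : ℝ) (hLf : 0 < Lf) (hlip : LipschitzWith (Real.toNNReal Lf) f')
    (g : Eucl n → EReal) (hgp : ProperFun g) (hglsc : LowerSemicontinuous g)
    (hgconv : ConvexFun g)
    (γ : ℝ) (hγ : 0 < γ) (hγL : γ < 1/Lf) :
    (∀ α : ℝ, Bornology.IsBounded {x : Eucl n | (f x : EReal) + g x ≤ (α : EReal)}) ↔
    (∀ α : ℝ, Bornology.IsBounded {x : Eucl n | fbe f f' g γ x ≤ (α : EReal)}) := by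
  have hle : ∀ x, fbe f f' g γ x ≤ (f x : EReal) + g x := by
    intro x
    rw [fbe]
    have heq : ((f x + (inner ℝ (f' x) (x - x) : ℝ) + 1/(2*γ) * ‖x - x‖^2 : ℝ) : EReal) + g x
        = (f x : EReal) + g x := by
      norm_num [sub_self, inner_zero_right]
    calc (⨅ w, ((f x + (inner ℝ (f' x) (w - x) : ℝ) + 1/(2*γ) * ‖w - x‖^2 : ℝ) : EReal) + g w)
        ≤ ((f x + (inner ℝ (f' x) (x - x) : ℝ) + 1/(2*γ) * ‖x - x‖^2 : ℝ) : EReal) + g x :=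
          iInf_le _ x
      _ = (f x : EReal) + g x := heq
  constructor
  · intro hφ α
    obtain ⟨R, hR⟩ := (hφ (α+1)).subset_closedBall 0
    set R' := max R 0 with hR'def
    have hfd : Differentiable ℝ f := fun x => (hgrad x).hasFDerivAt.differentiableAt
    obtain ⟨z, hzK, hzmin⟩ := (isCompact_closedBall (0:Eucl n) R').exists_isMinOn
      ⟨0, by simp [hR'def]⟩ hfd.continuous.continuousOn
    obtain ⟨m₂, hm₂⟩ := lsc_bddBelow' (isCompact_closedBall (0:Eucl n) R') hglsc hgp.2
    set m : ℝ := f z + m₂ with hmdef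
    have hm : ∀ w ∈ Metric.closedBall (0:Eucl n) R', ((m : ℝ) : EReal) ≤ (f w : EReal) + g w := by
      intro w hw
      have h1 : f z ≤ f w := hzmin hw
      have h2 := hm₂ w hw
      calc ((m : ℝ) : EReal) = ((f z : ℝ) : EReal) + ((m₂ : ℝ) : EReal) := by
            rw [hmdef]; exact_mod_cast EReal.coe_add (f z) m₂
        _ ≤ (f w : EReal) + g w := by
            apply add_le_add _ h2
            exact_mod_cast h1
    set c : ℝ := 1/(2*γ) - Lf/2 with hcdef
    have hγLf : γ * Lf < 1 := by
      have := (lt_div_iff₀ hLf).1 hγL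
      linarith
    have hc : 0 < c := by
      rw [hcdef]
      rw [sub_pos, div_lt_div_iff₀ (by norm_num) (by linarith)]
      nlinarith
    apply (Metric.isBounded_closedBall (x := (0:Eucl n))
      (r := R' + Real.sqrt ((α + 1 - m)/c))).subset
    intro x hx
    simp only [Set.mem_setOf_eq] at hx
    have hlt : fbe f f' g γ x < ((α + 1 : ℝ) : EReal) :=
      lt_of_le_of_lt hx (by exact_mod_cast lt_add_one α)
    rw [fbe, iInf_lt_iff] at hlt
    obtain ⟨w, hw⟩ := hlt
    set a : ℝ := f x + (inner ℝ (f' x) (w - x) : ℝ) + 1/(2*γ) * ‖w - x‖^2 with ha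
    have hgb : g w ≠ ⊥ := hgp.2 w
    have hgt : g w ≠ ⊤ := by
      intro h
      rw [h] at hw
      rw [EReal.coe_add_top] at hw
      exact not_top_lt hw
    have hgw : (((g w).toReal : ℝ) : EReal) = g w := EReal.coe_toReal hgt hgb
    set t : ℝ := (g w).toReal with htdef
    have hwlt : a + t < α + 1 := by
      have h1 : ((a + t : ℝ) : EReal) < ((α + 1 : ℝ) : EReal) := by
        rw [EReal.coe_add, hgw]; exact hw
      exact_mod_cast h1
    have hdes := descent_lemma' f f' hgrad Lf hLf hlip x w
    have key : f w + c * ‖w - x‖^2 ≤ a := by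
      rw [ha, hcdef]; nlinarith [sq_nonneg ‖w - x‖]
    have hsq : (0:ℝ) ≤ c * ‖w - x‖^2 := mul_nonneg hc.le (sq_nonneg _)
    have hφw : f w + t < α + 1 := by linarith
    have hwK : w ∈ Metric.closedBall (0:Eucl n) R' := by
      have h1 : (f w : EReal) + g w ≤ ((α + 1 : ℝ) : EReal) := by
        rw [← hgw, ← EReal.coe_add]
        exact_mod_cast hφw.le
      have h2 := hR h1
      exact Metric.closedBall_subset_closedBall (le_max_left R 0) h2
    have hmw : m ≤ f w + t := by
      have h1 := hm w hwK
      rw [← hgw, ← EReal.coe_add] at h1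
      exact_mod_cast h1
    have hn : c * ‖w - x‖^2 < α + 1 - m := by linarith
    have hnorm : ‖w - x‖ ≤ Real.sqrt ((α + 1 - m)/c) := by
      rw [← Real.sqrt_sq (norm_nonneg (w - x))]
      apply Real.sqrt_le_sqrt
      rw [le_div_iff₀ hc]
      nlinarith
    rw [Metric.mem_closedBall, dist_zero_right]
    calc ‖x‖ = ‖w + (x - w)‖ := by rw [add_sub_cancel]
      _ ≤ ‖w‖ + ‖x - w‖ := norm_add_le _ _
      _ ≤ R' + Real.sqrt ((α + 1 - m)/c) := by
          apply add_le_add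
          · simpa [dist_zero_right] using (Metric.mem_closedBall.1 hwK)
          · rw [norm_sub_rev]; exact hnorm
  · intro hfbe α
    apply (hfbe α).subset
    intro x hx
    simp only [Set.mem_setOf_eq] at hx ⊢
    exact le_trans (hle x) hx
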